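/- arXiv:2102.07937 — 4 statements merged into one kernel-verified Lean document; each statement's English description precedes it below -/
import Mathlib

section
/- Let A be a complete normed ring (Banach algebra), γ ∈ [0,1), Δ ≥ 0 with γΔ < 1, and ε ≥ 0. Let T, T', Z, Z' ∈ A satisfy ‖T‖ ≤ Δ, ‖T'‖ ≤ Δ, ‖Z‖ ≤ Δ, ‖Z'‖ ≤ Δ, ‖T' − T‖ ≤ ε and ‖Z' − Z‖ ≤ ε. Then the series F = ∑_{r=0}^∞ γ^r · T^r · (T − Z) and F' = ∑_{r=0}^∞ γ^r · T'^r · (T' − Z') converge absolutely in A and ‖F' − F‖ ≤ 2ε/(1 − γΔ)². -/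
/-!
Write `F(a, c) = ∑ γ ^ r • (a ^ r * (a - c))`. Each term is bounded by `(γ Δ) ^ r ‖a - c‖`, which
gives absolute convergence. For the difference, split
`T' ^ r (T' - Z') - T ^ r (T - Z) = (T' ^ r - T ^ r)(T - Z) + T' ^ r ((T' - Z') - (T - Z))`
and use the telescoping estimate `‖T' ^ r - T ^ r‖ ≤ r Δ ^ (r - 1) ‖T' - T‖`: the `r`-th term of
`F' - F` is at most `2 ε (r + 1) (γ Δ) ^ r`, and `∑ (r + 1) x ^ r = 1 / (1 - x) ^ 2`.
-/

theorem natCast_mul_pow_pred_mul (n : ℕ) (x : ℝ) : n * x ^ (n - 1) * x = n * x ^ n := by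
  cases n <;> simp [pow_succ, mul_assoc]

theorem hasSum_add_one_mul_geometric_of_norm_lt_one {x : ℝ} (hx : ‖x‖ < 1) :
    HasSum (fun n : ℕ => (n + 1) * x ^ n) (1 / (1 - x) ^ 2) := by
  simpa using hasSum_choose_mul_geometric_of_norm_lt_one 1 hx

section SeminormedRing

variable {A : Type*} [SeminormedRing A]

-- Unlike `norm_pow_le`, this needs no `NormOneClass`: the factor `w` absorbs `a ^ 0 = 1`.
theorem norm_pow_mul_le (a w : A) (n : ℕ) : ‖a ^ n * w‖ ≤ ‖a‖ ^ n * ‖w‖ := by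
  induction n with
  | zero => simp
  | succ n ih =>
    calc ‖a ^ (n + 1) * w‖ = ‖a * (a ^ n * w)‖ := by rw [pow_succ', mul_assoc]
      _ ≤ ‖a‖ * (‖a‖ ^ n * ‖w‖) := (norm_mul_le _ _).trans (by gcongr)
      _ = ‖a‖ ^ (n + 1) * ‖w‖ := by ring

theorem norm_pow_sub_pow_le {a b : A} {Δ : ℝ} (ha : ‖a‖ ≤ Δ) (hb : ‖b‖ ≤ Δ) (n : ℕ) :
    ‖b ^ n - a ^ n‖ ≤ n * Δ ^ (n - 1) * ‖b - a‖ := by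
  have hΔ : 0 ≤ Δ := (norm_nonneg a).trans ha
  induction n with
  | zero => simp
  | succ n ih =>
    have split : b ^ (n + 1) - a ^ (n + 1) = b ^ n * (b - a) + (b ^ n - a ^ n) * a := by
      noncomm_ring
    calc ‖b ^ (n + 1) - a ^ (n + 1)‖
        ≤ ‖b‖ ^ n * ‖b - a‖ + ‖b ^ n - a ^ n‖ * ‖a‖ := by
          rw [split]
          exact (norm_add_le _ _).trans (add_le_add (norm_pow_mul_le _ _ _) (norm_mul_le _ _))
      _ ≤ Δ ^ n * ‖b - a‖ + n * Δ ^ (n - 1) * ‖b - a‖ * Δ := by gcongr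
      _ = (n + 1 : ℕ) * Δ ^ (n + 1 - 1) * ‖b - a‖ := by
          rw [mul_right_comm _ ‖b - a‖, natCast_mul_pow_pred_mul]
          push_cast
          ring

theorem norm_pow_mul_sub_pow_mul_le {a b v w : A} {Δ : ℝ} (ha : ‖a‖ ≤ Δ) (hb : ‖b‖ ≤ Δ)
    (n : ℕ) :
    ‖b ^ n * v - a ^ n * w‖ ≤ n * Δ ^ (n - 1) * ‖b - a‖ * ‖w‖ + Δ ^ n * ‖v - w‖ := by
  have split : b ^ n * v - a ^ n * w = (b ^ n - a ^ n) * w + b ^ n * (v - w) := by noncomm_ring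
  rw [split]
  refine (norm_add_le _ _).trans (add_le_add ?_ ?_)
  · exact (norm_mul_le _ _).trans (by gcongr; exact norm_pow_sub_pow_le ha hb n)
  · exact (norm_pow_mul_le _ _ _).trans (by gcongr)

end SeminormedRing

section NormedAlgebra

variable {A : Type*} [SeminormedRing A] [NormedAlgebra ℝ A] {γ Δ : ℝ}

theorem norm_smul_pow_mul_le (hγ : 0 ≤ γ) (a w : A) (r : ℕ) :
    ‖γ ^ r • (a ^ r * w)‖ ≤ (γ * ‖a‖) ^ r * ‖w‖ := by
  rw [norm_smul, norm_pow, Real.norm_of_nonneg hγ, mul_pow, mul_assoc]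
  exact mul_le_mul_of_nonneg_left (norm_pow_mul_le a w r) (pow_nonneg hγ r)

theorem summable_norm_smul_pow_mul (hγ : 0 ≤ γ) {a : A} (ha : ‖a‖ ≤ Δ) (hγΔ : γ * Δ < 1)
    (w : A) : Summable fun r : ℕ => ‖γ ^ r • (a ^ r * w)‖ := by
  have hγΔ0 : 0 ≤ γ * Δ := mul_nonneg hγ ((norm_nonneg a).trans ha)
  refine .of_nonneg_of_le (fun r => norm_nonneg _) (fun r => ?_)
    ((summable_geometric_of_lt_one hγΔ0 hγΔ).mul_right ‖w‖)
  exact (norm_smul_pow_mul_le hγ a w r).trans (by gcongr)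

end NormedAlgebra

theorem stmt_1_general {A : Type*} [NormedRing A] [NormedAlgebra ℝ A] [CompleteSpace A]
    (γ Δ ε : ℝ) (hγ0 : 0 ≤ γ) (hΔ : 0 ≤ Δ) (hγΔ : γ * Δ < 1) (hε : 0 ≤ ε)
    (T T' Z Z' : A)
    (hT : ‖T‖ ≤ Δ) (hT' : ‖T'‖ ≤ Δ) (hZ : ‖Z‖ ≤ Δ)
    (hTT : ‖T' - T‖ ≤ ε) (hZZ : ‖Z' - Z‖ ≤ ε) :
    (Summable fun r : ℕ => ‖γ ^ r • (T ^ r * (T - Z))‖) ∧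
    (Summable fun r : ℕ => ‖γ ^ r • (T' ^ r * (T' - Z'))‖) ∧
    ‖(∑' r : ℕ, γ ^ r • (T' ^ r * (T' - Z'))) - ∑' r : ℕ, γ ^ r • (T ^ r * (T - Z))‖
      ≤ 2 * ε / (1 - γ * Δ) ^ 2 := by
  have hS := summable_norm_smul_pow_mul hγ0 hT hγΔ (T - Z)
  have hS' := summable_norm_smul_pow_mul hγ0 hT' hγΔ (T' - Z')
  refine ⟨hS, hS', ?_⟩
  have hTZ : ‖T - Z‖ ≤ 2 * Δ := (norm_sub_le T Z).trans (by linarith)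
  have hdiff : ‖(T' - Z') - (T - Z)‖ ≤ 2 * ε := by
    rw [sub_sub_sub_comm]
    exact (norm_sub_le _ _).trans (by linarith)
  have hterm (r : ℕ) : ‖γ ^ r • (T' ^ r * (T' - Z')) - γ ^ r • (T ^ r * (T - Z))‖
      ≤ 2 * ε * ((r + 1) * (γ * Δ) ^ r) := by
    rw [← smul_sub, norm_smul, norm_pow, Real.norm_of_nonneg hγ0]
    calc γ ^ r * ‖T' ^ r * (T' - Z') - T ^ r * (T - Z)‖
        ≤ γ ^ r * (r * Δ ^ (r - 1) * ε * (2 * Δ) + Δ ^ r * (2 * ε)) := by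
          gcongr
          exact (norm_pow_mul_sub_pow_mul_le hT hT' r).trans (by gcongr)
      _ = 2 * ε * γ ^ r * (r * Δ ^ (r - 1) * Δ + Δ ^ r) := by ring
      _ = 2 * ε * ((r + 1) * (γ * Δ) ^ r) := by rw [natCast_mul_pow_pred_mul, mul_pow]; ring
  have hsum := (hasSum_add_one_mul_geometric_of_norm_lt_one
    (by rw [Real.norm_of_nonneg (mul_nonneg hγ0 hΔ)]; exact hγΔ)).mul_left (2 * ε)
  rw [← hS'.of_norm.tsum_sub hS.of_norm, ← mul_one_div]
  exact tsum_of_norm_bounded hsum hterm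

/-- In a complete normed ring (Banach algebra over ℝ), for `γ ∈ [0,1)`, `Δ ≥ 0` with `γΔ < 1`,
`ε ≥ 0`, and `T, T', Z, Z'` with norms bounded by `Δ`, `‖T' - T‖ ≤ ε`, `‖Z' - Z‖ ≤ ε`,
the series `F = ∑_{r=0}^∞ γ^r T^r (T - Z)` and `F' = ∑_{r=0}^∞ γ^r T'^r (T' - Z')`
converge absolutely and `‖F' - F‖ ≤ 2ε/(1 - γΔ)²`. -/
theorem stmt_1 {A : Type*} [NormedRing A] [NormedAlgebra ℝ A] [CompleteSpace A]
    (γ Δ ε : ℝ) (hγ0 : 0 ≤ γ) (hγ1 : γ < 1) (hΔ : 0 ≤ Δ) (hγΔ : γ * Δ < 1) (hε : 0 ≤ ε)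
    (T T' Z Z' : A)
    (hT : ‖T‖ ≤ Δ) (hT' : ‖T'‖ ≤ Δ) (hZ : ‖Z‖ ≤ Δ) (hZ' : ‖Z'‖ ≤ Δ)
    (hTT : ‖T' - T‖ ≤ ε) (hZZ : ‖Z' - Z‖ ≤ ε) :
    (Summable fun r : ℕ => ‖γ ^ r • (T ^ r * (T - Z))‖) ∧
    (Summable fun r : ℕ => ‖γ ^ r • (T' ^ r * (T' - Z'))‖) ∧
    ‖(∑' r : ℕ, γ ^ r • (T' ^ r * (T' - Z'))) - ∑' r : ℕ, γ ^ r • (T ^ r * (T - Z))‖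
      ≤ 2 * ε / (1 - γ * Δ) ^ 2 :=
  stmt_1_general γ Δ ε hγ0 hΔ hγΔ hε T T' Z Z' hT hT' hZ hTT hZZ
end

section
/- Let Δ > 0, k ≥ 1, and let Z : ℕ⁺ → ℕ⁺ → ℝ satisfy |Z i j| < Δ/(ζ(3)·i³·j³) for all i, j ≥ 1. Let [ₖ∞Z] denote the complement of the k-truncation of Z, i.e., [ₖ∞Z] i j = Z i j if max(i,j) > k and 0 if both i ≤ k and j ≤ k. Then ‖[ₖ∞Z]‖∞ < max{ Δ·e/(2·ζ(3)·(k+1)²), Δ/(k+1)³ }. -/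
open Filter


/-- The Riemann zeta value ζ(3) = ∑_{n=1}^∞ 1/n³. -/
noncomputable def zeta3 : ℝ := ∑' n : ℕ+, 1 / (n : ℝ) ^ 3

lemma sum_cube : Summable (fun j : ℕ+ => 1 / (j : ℝ) ^ 3) := by
  have h : Summable (fun n : ℕ => 1 / (n : ℝ) ^ 3) :=
    Real.summable_one_div_nat_pow.mpr (by norm_num)
  exact h.comp_injective (fun a b hab => PNat.coe_injective hab)

lemma zeta3_pos : 0 < zeta3 :=
  Summable.tsum_pos sum_cube (fun i => by positivity) 1 (by norm_num)

lemma sum_b (k : ℕ) : Summable (fun j : ℕ+ => if (j : ℕ) ≤ k then (0:ℝ) else 1 / (j : ℝ) ^ 3) := by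
  apply Summable.of_nonneg_of_le (fun j => ?_) (fun j => ?_) sum_cube
  · split <;> positivity
  · split
    · positivity
    · exact le_rfl

/-- tail bound : ∑_{j>k} 1/j³ ≤ 1/(2k(k+1)) -/
lemma tail_bound (k : ℕ) (hk : 1 ≤ k) :
    ∑' j : ℕ+, (if (j : ℕ) ≤ k then (0:ℝ) else 1 / (j : ℝ) ^ 3)
      ≤ 1 / (2 * (k:ℝ) * ((k:ℝ) + 1)) := by
  set b : ℕ+ → ℝ := fun j => if (j : ℕ) ≤ k then (0:ℝ) else 1 / (j : ℝ) ^ 3 with hb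
  have hb_nonneg : ∀ j, 0 ≤ b j := fun j => by
    simp only [hb]; split <;> positivity
  have hb_le : ∀ j : ℕ+, b j ≤ 1 / (j : ℝ) ^ 3 := fun j => by
    simp only [hb]; split
    · positivity
    · exact le_rfl
  have hb_summable : Summable b := Summable.of_nonneg_of_le hb_nonneg hb_le sum_cube
  set A : ℕ → ℝ := fun n => ((max n k : ℕ) : ℝ) with hA
  set G : ℕ → ℝ := fun n => 1 / (2 * A n * (A n + 1)) with hG
  have hA_pos : ∀ n, 0 < A n := fun n => by
    have : 1 ≤ max n k := le_trans hk (le_max_right _ _)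
    simp only [hA]; exact_mod_cast Nat.lt_of_lt_of_le Nat.zero_lt_one this
  have hA_mono : ∀ n, A n ≤ A (n + 1) := fun n => by
    simp only [hA]; exact_mod_cast max_le_max (Nat.le_succ n) (le_refl k)
  set t : ℕ → ℝ := fun n => G n - G (n + 1) with ht
  have ht_nonneg : ∀ n, 0 ≤ t n := fun n => by
    have h1 := hA_pos n
    have h2 := hA_pos (n + 1)
    have h3 := hA_mono n
    simp only [ht, sub_nonneg, hG]
    apply one_div_le_one_div_of_le (by nlinarith) (by nlinarith)
  have hGtend : Tendsto G atTop (nhds 0) := by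
    have h1 : Tendsto (fun n : ℕ => 1 / (n : ℝ)) atTop (nhds 0) :=
      tendsto_one_div_atTop_nhds_zero_nat
    apply squeeze_zero' (Eventually.of_forall fun n => le_of_lt (by positivity))
      _ h1
    filter_upwards [eventually_ge_atTop 1] with n hn
    have hn' : (1:ℝ) ≤ (n:ℝ) := by exact_mod_cast hn
    have hAn : (n:ℝ) ≤ A n := by
      simp only [hA]; exact_mod_cast le_max_left n k
    have := hA_pos n
    simp only [hG]
    rw [div_le_div_iff₀ (by positivity) (by positivity)]
    nlinarith
  have hGsum : HasSum t (G 0) := by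
    rw [hasSum_iff_tendsto_nat_of_nonneg ht_nonneg]
    have : ∀ n, ∑ i ∈ Finset.range n, t i = G 0 - G n := fun n =>
      Finset.sum_range_sub' G n
    simp_rw [this]
    simpa using Tendsto.const_sub (G 0) hGtend
  have hG0 : G 0 = 1 / (2 * (k:ℝ) * ((k:ℝ) + 1)) := by
    simp [hG, hA, Nat.max_eq_right (Nat.zero_le k)]
  have key : ∑' j : ℕ+, b j ≤ ∑' n : ℕ, t n := by
    apply Summable.tsum_le_tsum_of_inj (fun j : ℕ+ => (j : ℕ) - 1)
    · intro a b hab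
      have ha := a.pos
      have hbp := b.pos
      have hab' : (a:ℕ) - 1 = (b:ℕ) - 1 := hab
      exact PNat.coe_injective (by omega)
    · exact fun c _ => ht_nonneg c
    · intro j
      obtain ⟨n, hn⟩ : ∃ n, (j : ℕ) = n + 1 := ⟨(j:ℕ) - 1, by have := j.pos; omega⟩
      have hn' : (j : ℕ) - 1 = n := by omega
      rw [hn']
      by_cases hjk : (j : ℕ) ≤ k
      · simp only [hb, if_pos hjk]; exact ht_nonneg n
      · have hkn : k ≤ n := by omega
        have hAn : A n = (n : ℝ) := by
          simp only [hA]; exact_mod_cast congrArg Nat.cast (Nat.max_eq_left hkn)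
        have hAn1 : A (n+1) = (n : ℝ) + 1 := by
          simp only [hA]
          have : max (n+1) k = n + 1 := Nat.max_eq_left (by omega)
          rw [this]; push_cast
          try ring
        have hjcast : ((j:ℝ)) = (n:ℝ) + 1 := by exact_mod_cast hn
        simp only [hb, if_neg hjk, ht, hG, hAn, hAn1, hjcast]
        have hx : (1:ℝ) ≤ (n:ℝ) := by exact_mod_cast le_trans hk hkn
        have heq : 1 / (2 * (n:ℝ) * ((n:ℝ) + 1)) - 1 / (2 * ((n:ℝ)+1) * ((n:ℝ)+1+1))
            = 1 / ((n:ℝ) * ((n:ℝ)+1) * ((n:ℝ)+2)) := by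
          field_simp
          ring
        rw [heq]
        rw [div_le_div_iff₀ (by positivity) (by positivity)]
        nlinarith
    · exact hb_summable
    · exact hGsum.summable
  calc ∑' j : ℕ+, b j ≤ ∑' n : ℕ, t n := key
    _ = G 0 := hGsum.tsum_eq
    _ = _ := hG0

/-- If `|Z i j| < Δ/(ζ(3)·i³·j³)` for all `i, j ≥ 1` and `k ≥ 1`, then the complement of the
`k`-truncation of `Z` (equal to `Z i j` when `max i j > k` and `0` otherwise) has induced
infinity norm less than `max (Δ·e/(2·ζ(3)·(k+1)²)) (Δ/(k+1)³)`. -/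
theorem stmt_3 (Δ : ℝ) (hΔ : 0 < Δ) (k : ℕ) (hk : 1 ≤ k) (Z : ℕ+ → ℕ+ → ℝ)
    (hZ : ∀ i j : ℕ+, |Z i j| < Δ / (zeta3 * (i : ℝ) ^ 3 * (j : ℝ) ^ 3)) :
    (⨆ i : ℕ+, ∑' j : ℕ+, |if (i : ℕ) ≤ k ∧ (j : ℕ) ≤ k then (0 : ℝ) else Z i j|)
      < max (Δ * Real.exp 1 / (2 * zeta3 * ((k : ℝ) + 1) ^ 2)) (Δ / ((k : ℝ) + 1) ^ 3) := by
  have hζ := zeta3_pos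
  have hkr1 : (1:ℝ) ≤ (k:ℝ) := by exact_mod_cast hk
  have hcast : ∀ i : ℕ+, (1:ℝ) ≤ (i:ℝ) := fun i => by exact_mod_cast i.one_le
  have heq : ∀ i j : ℕ+, Δ / (zeta3 * (i:ℝ)^3 * (j:ℝ)^3)
      = (Δ / (zeta3 * (i:ℝ)^3)) * (1/(j:ℝ)^3) := by
    intro i j
    have h1 := hcast i
    have h2 := hcast j
    field_simp
  have hrow_le : ∀ i j : ℕ+, |if (i:ℕ) ≤ k ∧ (j:ℕ) ≤ k then (0:ℝ) else Z i j|
      ≤ (Δ / (zeta3 * (i:ℝ)^3)) * (1/(j:ℝ)^3) := by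
    intro i j
    have h1 := hcast i
    have h2 := hcast j
    split
    · rw [abs_zero]; positivity
    · rw [← heq i j]; exact (hZ i j).le
  have hg_summable : ∀ i : ℕ+, Summable (fun j : ℕ+ => (Δ/(zeta3*(i:ℝ)^3)) * (1/(j:ℝ)^3)) :=
    fun i => sum_cube.mul_left _
  have hf_summable : ∀ i : ℕ+,
      Summable (fun j : ℕ+ => |if (i:ℕ) ≤ k ∧ (j:ℕ) ≤ k then (0:ℝ) else Z i j|) :=
    fun i => Summable.of_nonneg_of_le (fun j => abs_nonneg _) (hrow_le i) (hg_summable i)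
  have hg_tsum : ∀ i : ℕ+, ∑' j : ℕ+, (Δ/(zeta3*(i:ℝ)^3)) * (1/(j:ℝ)^3) = Δ/(i:ℝ)^3 := by
    intro i
    have h1 := hcast i
    rw [tsum_mul_left]
    have hz : (∑' j : ℕ+, 1/(j:ℝ)^3) = zeta3 := rfl
    rw [hz]
    field_simp
  set i0 : ℕ+ := ⟨k+1, k.succ_pos⟩ with hi0
  have hi0k : (i0:ℕ) = k + 1 := rfl
  have hi0r : ((i0:ℝ)) = (k:ℝ) + 1 := by
    rw [show ((i0:ℝ)) = (((i0:ℕ):ℕ):ℝ) from rfl, hi0k]; push_cast; ring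
  set C1 : ℝ := Δ / zeta3 * (1/(2*(k:ℝ)*((k:ℝ)+1))) with hC1
  set D : ℝ := Δ / ((k:ℝ)+2)^3 with hD
  set R : ℝ := ∑' j : ℕ+, |if (i0:ℕ) ≤ k ∧ (j:ℕ) ≤ k then (0:ℝ) else Z i0 j| with hRdef
  set M1 : ℝ := Δ * Real.exp 1 / (2*zeta3*((k:ℝ)+1)^2) with hM1
  set M2 : ℝ := Δ / ((k:ℝ)+1)^3 with hM2
  -- R < M2
  have hRlt : R < M2 := by
    have hcond : ∀ j : ℕ+, ¬((i0:ℕ) ≤ k ∧ (j:ℕ) ≤ k) := by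
      intro j h; rw [hi0k] at h; omega
    have hRe : R = ∑' j : ℕ+, |Z i0 j| := tsum_congr fun j => by rw [if_neg (hcond j)]
    have hpt : ∀ j : ℕ+, |Z i0 j| ≤ (Δ/(zeta3*(i0:ℝ)^3)) * (1/(j:ℝ)^3) := by
      intro j; rw [← heq i0 j]; exact (hZ i0 j).le
    have hsumf : Summable (fun j : ℕ+ => |Z i0 j|) :=
      Summable.of_nonneg_of_le (fun j => abs_nonneg _) hpt (hg_summable i0)
    have hlt : ∑' j : ℕ+, |Z i0 j| < ∑' j : ℕ+, (Δ/(zeta3*(i0:ℝ)^3)) * (1/(j:ℝ)^3) := by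
      refine Summable.tsum_lt_tsum (i := 1) hpt ?_ hsumf (hg_summable i0)
      · exact (by rw [← heq i0 1]; exact hZ i0 1 : |Z i0 1| < (Δ/(zeta3*(i0:ℝ)^3)) * (1/((1:ℕ+):ℝ)^3))
    rw [hRe]
    calc ∑' j : ℕ+, |Z i0 j| < _ := hlt
      _ = Δ/(i0:ℝ)^3 := hg_tsum i0
      _ = M2 := by rw [hi0r, hM2]
  -- C1 < M1
  have hC1lt : C1 < M1 := by
    rw [hC1, hM1, div_mul_div_comm, div_lt_div_iff₀ (by positivity) (by positivity)]
    have he := Real.exp_one_gt_d9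
    have key : 2*((k:ℝ)+1)^2 < Real.exp 1 * (2*(k:ℝ)*((k:ℝ)+1)) := by
      nlinarith [he, mul_pos (lt_of_lt_of_le zero_lt_one hkr1) (show (0:ℝ) < (k:ℝ)+1 by linarith), sq_nonneg ((k:ℝ)-1)]
    nlinarith [mul_lt_mul_of_pos_left key (mul_pos hΔ hζ)]
  -- D < M2
  have hDlt : D < M2 := by
    rw [hD, hM2]
    apply div_lt_div_of_pos_left hΔ (by positivity) (by nlinarith)
  -- row bounds
  have hrowbound : ∀ i : ℕ+,
      (∑' j : ℕ+, |if (i:ℕ) ≤ k ∧ (j:ℕ) ≤ k then (0:ℝ) else Z i j|) ≤ max C1 (max D R) := by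
    intro i
    have h1 := hcast i
    rcases le_or_gt (i:ℕ) k with hik | hik
    · refine le_trans ?_ (le_max_left _ _)
      have hble : (∑' j : ℕ+, |if (i:ℕ) ≤ k ∧ (j:ℕ) ≤ k then (0:ℝ) else Z i j|)
          ≤ ∑' j : ℕ+, (Δ/zeta3) * (if (j:ℕ) ≤ k then (0:ℝ) else 1/(j:ℝ)^3) := by
        refine Summable.tsum_le_tsum ?_ (hf_summable i) ?_
        · intro j
          have h2 := hcast j
          by_cases hjk : (j:ℕ) ≤ k
          · rw [if_pos ⟨hik, hjk⟩, if_pos hjk, abs_zero, mul_zero]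
          · rw [if_neg (fun h => hjk h.2), if_neg hjk]
            calc |Z i j| ≤ (Δ / (zeta3 * (i:ℝ)^3)) * (1/(j:ℝ)^3) := by
                  rw [← heq i j]; exact (hZ i j).le
              _ ≤ (Δ/zeta3) * (1/(j:ℝ)^3) := by
                  have hi3 : (1:ℝ) ≤ (i:ℝ)^3 := one_le_pow₀ h1
                  gcongr
                  all_goals nlinarith [mul_le_mul_of_nonneg_left hi3 hζ.le]
        · exact (sum_b k).mul_left _
      refine le_trans hble ?_
      rw [tsum_mul_left]
      calc (Δ/zeta3) * ∑' j : ℕ+, (if (j:ℕ) ≤ k then (0:ℝ) else 1/(j:ℝ)^3)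
          ≤ (Δ/zeta3) * (1 / (2 * (k:ℝ) * ((k:ℝ) + 1))) := by
            apply mul_le_mul_of_nonneg_left (tail_bound k hk) (by positivity)
        _ = C1 := rfl
    · rcases lt_or_ge (i:ℕ) (k+2) with hik2 | hik2
      · have : i = i0 := PNat.coe_injective (by rw [hi0k]; omega)
        rw [this]
        exact le_trans (le_of_eq rfl) (le_trans (le_max_right _ _) (le_max_right _ _))
      · refine le_trans ?_ (le_trans (le_max_left _ _) (le_max_right _ _))
        have hle := Summable.tsum_le_tsum (hrow_le i) (hf_summable i) (hg_summable i)
        rw [hg_tsum i] at hle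
        refine le_trans hle ?_
        rw [hD]
        have hik2r : (k:ℝ) + 2 ≤ (i:ℝ) := by
          have : ((k:ℕ) + 2 : ℕ) ≤ (i:ℕ) := hik2
          exact_mod_cast this
        gcongr
        all_goals linarith
  exact lt_of_le_of_lt (ciSup_le hrowbound)
    (max_lt (lt_of_lt_of_le hC1lt (le_max_left _ _))
      (max_lt (lt_of_lt_of_le hDlt (le_max_right _ _))
        (lt_of_lt_of_le hRlt (le_max_right _ _))))
end

section
/- Let (φₙ)_{n≥1} be functions on [−1,1] with |φₙ(s)| ≤ 1 for all n and s, let A be a finite index set, and for each a ∈ A let F⁽ᵃ⁾, F̂⁽ᵃ⁾ : ℕ⁺ → ℕ⁺ → ℝ have finite induced infinity norm. Suppose the problem is β-separable: there exists ᾱ : ℕ⁺ → ℝ with ∑ᵢ |ᾱᵢ| = 1 and ∑ᵢ ᾱᵢ·(∑ⱼ F⁽ᵃ⁾ i j·φⱼ(s)) ≥ β > 0 for all s ∈ [−1,1] and a ∈ A. Suppose ‖F̂⁽ᵃ⁾ − F⁽ᵃ⁾‖∞ ≤ ε < β for all a ∈ A, and let S̄ ⊆ [−1,1] be nonempty. Then: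 (1) the vector ᾱ/(β − ε) satisfies ∑ᵢ (ᾱᵢ/(β−ε))·(∑ⱼ F̂⁽ᵃ⁾ i j·φⱼ(s̄)) ≥ 1 for all s̄ ∈ S̄ and a ∈ A; and (2) consequently any α̂ minimizing the ℓ¹ norm ∑ᵢ |αᵢ| over the set of α with ∑ᵢ αᵢ·(∑ⱼ F̂⁽ᵃ⁾ i j·φⱼ(s̄)) ≥ 1 for all s̄ ∈ S̄ and a ∈ A satisfies ∑ᵢ |α̂ᵢ| ≤ 1/(β − ε). -/
set_option maxHeartbeats 1000000


/-- If the IRL problem is `β`-separable with separating unit-ℓ¹ vector `ᾱ`, and the estimated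
matrices `F̂⁽ᵃ⁾` satisfy `‖F̂⁽ᵃ⁾ − F⁽ᵃ⁾‖∞ ≤ ε < β`, then (1) `ᾱ/(β−ε)` satisfies the linear
program constraints `αᵀF̂⁽ᵃ⁾φ(s̄) ≥ 1` for all `s̄ ∈ S̄` and `a`, and (2) any ℓ¹-minimizer `α̂`
of the constraints satisfies `‖α̂‖₁ ≤ 1/(β−ε)`. -/
theorem stmt_13 {Act : Type*} [Fintype Act]
    (φ : ℕ+ → ℝ → ℝ)
    (hbdd : ∀ (n : ℕ+) (s : ℝ), s ∈ Set.Icc (-1 : ℝ) 1 → |φ n s| ≤ 1)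
    (F Fhat : Act → ℕ+ → ℕ+ → ℝ)
    (hFsum : ∀ a, ∀ i : ℕ+, Summable fun j : ℕ+ => |F a i j|)
    (hFhatsum : ∀ a, ∀ i : ℕ+, Summable fun j : ℕ+ => |Fhat a i j|)
    (hFbdd : ∀ a, BddAbove (Set.range fun i : ℕ+ => ∑' j : ℕ+, |F a i j|))
    (hFhatbdd : ∀ a, BddAbove (Set.range fun i : ℕ+ => ∑' j : ℕ+, |Fhat a i j|))
    (β ε : ℝ) (hβ : 0 < β) (hε0 : 0 ≤ ε) (hεβ : ε < β)
    (αbar : ℕ+ → ℝ) (hαbarsum : Summable fun i : ℕ+ => |αbar i|)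
    (hαbarnorm : (∑' i : ℕ+, |αbar i|) = 1)
    (hsep : ∀ s ∈ Set.Icc (-1 : ℝ) 1, ∀ a : Act,
      β ≤ ∑' i : ℕ+, αbar i * ∑' j : ℕ+, F a i j * φ j s)
    (herr : ∀ a : Act, (⨆ i : ℕ+, ∑' j : ℕ+, |Fhat a i j - F a i j|) ≤ ε)
    (Sbar : Set ℝ) (hSne : Sbar.Nonempty) (hSsub : Sbar ⊆ Set.Icc (-1 : ℝ) 1) :
    (∀ s ∈ Sbar, ∀ a : Act,
      1 ≤ ∑' i : ℕ+, αbar i / (β - ε) * ∑' j : ℕ+, Fhat a i j * φ j s) ∧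
    (∀ αhat : ℕ+ → ℝ,
      (Summable fun i : ℕ+ => |αhat i|) →
      (∀ s ∈ Sbar, ∀ a : Act,
        1 ≤ ∑' i : ℕ+, αhat i * ∑' j : ℕ+, Fhat a i j * φ j s) →
      (∀ α : ℕ+ → ℝ, (Summable fun i : ℕ+ => |α i|) →
        (∀ s ∈ Sbar, ∀ a : Act,
          1 ≤ ∑' i : ℕ+, α i * ∑' j : ℕ+, Fhat a i j * φ j s) →
        (∑' i : ℕ+, |αhat i|) ≤ ∑' i : ℕ+, |α i|) →
      (∑' i : ℕ+, |αhat i|) ≤ 1 / (β - ε)) := by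
  have hβε : (0:ℝ) < β - ε := sub_pos.mpr hεβ
  -- key: summability and bound for products with φ
  have key : ∀ (G : ℕ+ → ℝ), (Summable fun j => |G j|) → ∀ s ∈ Set.Icc (-1:ℝ) 1,
      (Summable fun j : ℕ+ => G j * φ j s) ∧
      |∑' j : ℕ+, G j * φ j s| ≤ ∑' j : ℕ+, |G j| := by
    intro G hG s hs
    have h1 : Summable fun j : ℕ+ => |G j * φ j s| := by
      refine Summable.of_nonneg_of_le (fun j => abs_nonneg _) ?_ hG
      intro j
      rw [abs_mul]
      exact mul_le_of_le_one_right (abs_nonneg _) (hbdd j s hs)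
    refine ⟨h1.of_abs, ?_⟩
    calc |∑' j : ℕ+, G j * φ j s| ≤ ∑' j : ℕ+, |G j * φ j s| := by
          exact norm_tsum_le_tsum_norm (f := fun j : ℕ+ => G j * φ j s) h1
      _ ≤ ∑' j : ℕ+, |G j| := by
          refine Summable.tsum_le_tsum ?_ h1 hG
          intro j; rw [abs_mul]
          exact mul_le_of_le_one_right (abs_nonneg _) (hbdd j s hs)
  have hdsum : ∀ (a : Act) (i : ℕ+), Summable fun j : ℕ+ => |Fhat a i j - F a i j| := by
    intro a i
    refine Summable.of_nonneg_of_le (fun j => abs_nonneg _) (fun j => abs_sub _ _)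
      ((hFhatsum a i).add (hFsum a i))
  -- uniform bound on difference rows
  have hDle : ∀ (a : Act) (i : ℕ+), (∑' j : ℕ+, |Fhat a i j - F a i j|) ≤ ε := by
    intro a i
    have hbddD : BddAbove (Set.range fun i : ℕ+ => ∑' j : ℕ+, |Fhat a i j - F a i j|) := by
      obtain ⟨C, hC⟩ := hFbdd a
      obtain ⟨C', hC'⟩ := hFhatbdd a
      refine ⟨C' + C, ?_⟩
      rintro _ ⟨k, rfl⟩
      calc (∑' j : ℕ+, |Fhat a k j - F a k j|)
          ≤ ∑' j : ℕ+, (|Fhat a k j| + |F a k j|) :=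
            Summable.tsum_le_tsum (fun j => abs_sub _ _) (hdsum a k) ((hFhatsum a k).add (hFsum a k))
        _ = (∑' j : ℕ+, |Fhat a k j|) + ∑' j : ℕ+, |F a k j| :=
            Summable.tsum_add (hFhatsum a k) (hFsum a k)
        _ ≤ C' + C := add_le_add (hC' (Set.mem_range_self k)) (hC (Set.mem_range_self k))
    exact (le_ciSup hbddD i).trans (herr a)
  -- main inequality
  have hmain : ∀ s ∈ Set.Icc (-1:ℝ) 1, ∀ a : Act,
      β - ε ≤ ∑' i : ℕ+, αbar i * ∑' j : ℕ+, Fhat a i j * φ j s := by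
    intro s hs a
    set f : ℕ+ → ℝ := fun i => ∑' j : ℕ+, F a i j * φ j s with hf
    set d : ℕ+ → ℝ := fun i => ∑' j : ℕ+, (Fhat a i j - F a i j) * φ j s with hd
    have hg : ∀ i : ℕ+, (∑' j : ℕ+, Fhat a i j * φ j s) = f i + d i := by
      intro i
      rw [hf, hd]
      rw [← Summable.tsum_add (key _ (hFsum a i) s hs).1 (key _ (hdsum a i) s hs).1]
      exact tsum_congr fun j => by ring
    -- bounds on f and d
    obtain ⟨C, hC⟩ := hFbdd a
    have hfC : ∀ i : ℕ+, |f i| ≤ C :=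
      fun i => ((key _ (hFsum a i) s hs).2).trans (hC (Set.mem_range_self i))
    have hdε : ∀ i : ℕ+, |d i| ≤ ε :=
      fun i => ((key _ (hdsum a i) s hs).2).trans (hDle a i)
    -- summabilities
    have hαf : Summable fun i : ℕ+ => αbar i * f i := by
      refine Summable.of_abs (Summable.of_nonneg_of_le (fun i => abs_nonneg _) ?_
        (hαbarsum.mul_right C))
      intro i; rw [abs_mul]
      exact mul_le_mul_of_nonneg_left (hfC i) (abs_nonneg _)
    have hαdabs : Summable fun i : ℕ+ => |αbar i * d i| := by
      refine Summable.of_nonneg_of_le (fun i => abs_nonneg _) ?_ (hαbarsum.mul_right ε)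
      intro i; rw [abs_mul]
      exact mul_le_mul_of_nonneg_left (hdε i) (abs_nonneg _)
    have hαd : Summable fun i : ℕ+ => αbar i * d i := hαdabs.of_abs
    have hsplit : (∑' i : ℕ+, αbar i * ∑' j : ℕ+, Fhat a i j * φ j s)
        = (∑' i : ℕ+, αbar i * f i) + ∑' i : ℕ+, αbar i * d i := by
      rw [← Summable.tsum_add hαf hαd]
      exact tsum_congr fun i => by rw [hg i]; ring
    have hβf : β ≤ ∑' i : ℕ+, αbar i * f i := hsep s hs a
    have hdlow : -ε ≤ ∑' i : ℕ+, αbar i * d i := by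
      have habs : |∑' i : ℕ+, αbar i * d i| ≤ ε := by
        calc |∑' i : ℕ+, αbar i * d i| ≤ ∑' i : ℕ+, |αbar i * d i| := by
              exact norm_tsum_le_tsum_norm (f := fun i : ℕ+ => αbar i * d i) hαdabs
          _ ≤ ∑' i : ℕ+, |αbar i| * ε := by
              refine Summable.tsum_le_tsum ?_ hαdabs (hαbarsum.mul_right ε)
              intro i; rw [abs_mul]
              exact mul_le_mul_of_nonneg_left (hdε i) (abs_nonneg _)
          _ = ε := by rw [tsum_mul_right, hαbarnorm, one_mul]
      linarith [(abs_le.mp habs).1]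
    rw [hsplit]; linarith
  have part1 : ∀ s ∈ Sbar, ∀ a : Act,
      1 ≤ ∑' i : ℕ+, αbar i / (β - ε) * ∑' j : ℕ+, Fhat a i j * φ j s := by
    intro s hs a
    have h := hmain s (hSsub hs) a
    have heq : (∑' i : ℕ+, αbar i / (β - ε) * ∑' j : ℕ+, Fhat a i j * φ j s)
        = (β - ε)⁻¹ * ∑' i : ℕ+, αbar i * ∑' j : ℕ+, Fhat a i j * φ j s := by
      rw [← tsum_mul_left]
      exact tsum_congr fun i => by ring
    rw [heq]
    calc (1:ℝ) = (β - ε)⁻¹ * (β - ε) := (inv_mul_cancel₀ hβε.ne').symm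
      _ ≤ _ := mul_le_mul_of_nonneg_left h (inv_nonneg.mpr hβε.le)
  refine ⟨part1, ?_⟩
  intro αhat _ _ hmin
  have hsum2 : Summable fun i : ℕ+ => |αbar i / (β - ε)| := by
    simpa [abs_div, abs_of_pos hβε] using hαbarsum.div_const (β - ε)
  have := hmin (fun i => αbar i / (β - ε)) hsum2 part1
  calc (∑' i : ℕ+, |αhat i|) ≤ ∑' i : ℕ+, |αbar i / (β - ε)| := this
    _ = (∑' i : ℕ+, |αbar i|) / (β - ε) := by
        simp_rw [abs_div, abs_of_pos hβε]
        exact tsum_div_const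
    _ = 1 / (β - ε) := by rw [hαbarnorm]
end

section
/- Let (φₙ)_{n≥1} be functions on [−1,1] with |φₙ(s)| ≤ 1 for all n and s, let A be a finite index set, and for each a ∈ A let F⁽ᵃ⁾, F̂⁽ᵃ⁾ : ℕ⁺ → ℕ⁺ → ℝ have finite induced infinity norm. Let β > 0, ρ > 0, c > 0 with β > cρ. Assume: (i) the problem is β-separable, i.e. there exists ᾱ with ∑ᵢ |ᾱᵢ| = 1 and ∑ᵢ ᾱᵢ·(∑ⱼ F⁽ᵃ⁾ i j·φⱼ(s)) ≥ β for all s ∈ [−1,1] and a ∈ A; (ii) for every α ∈ ℓ¹ and a ∈ A, the function s ↦ ∑ᵢ αᵢ·(∑ⱼ F⁽ᵃ⁾ i j·φⱼ(s)) is Lipschitz on [−1,1] with constant ρ·∑ᵢ|αᵢ|; (iii) ‖F̂⁽ᵃ⁾ − F⁽ᵃ⁾‖∞ ≤ (β − cρ)/2 for all a ∈ A; and (iv) S̄ ⊆ [−1,1] is such that for every s ∈ [−1,1] there exists s̄ ∈ S̄ with |s − s̄| < c. Then any α̂ minimizing the ℓ¹ norm ∑ᵢ |αᵢ| over the set of α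 satisfying ∑ᵢ αᵢ·(∑ⱼ F̂⁽ᵃ⁾ i j·φⱼ(s̄)) ≥ 1 for all s̄ ∈ S̄ and a ∈ A satisfies ∑ᵢ α̂ᵢ·(∑ⱼ F⁽ᵃ⁾ i j·φⱼ(s)) > 0 for all s ∈ [−1,1] and all a ∈ A. -/
/-!
Write `V(α, s)` for `αᵀF⁽ᵃ⁾φ(s)`, `V̂` for its estimate, `N = ‖α̂‖₁`, `ε = (β − cρ)/2`.
Since `|φⱼ| ≤ 1`, the estimation error moves the criterion by at most `ε‖α‖₁`. Hence
`ᾱ / (β − ε)` is feasible, and minimality gives `N ≤ 1/(β − ε)`. For `s ∈ [-1,1]` choose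
`s̄ ∈ S̄` with `d = |s − s̄| < c`; then
`V(α̂, s) ≥ V̂(α̂, s̄) − εN − ρNd ≥ 1 − N(ε + ρd) ≥ 1 − (ε + ρd)/(β − ε) > 0`,
because `ε + ρd < ε + ρc = β − ε`.
-/

open Set

section TsumBounds

variable {ι κ : Type*}

theorem abs_tsum_mul_le {f x : ι → ℝ} {M : ℝ} (hf : Summable fun i => |f i|)
    (hx : ∀ i, |x i| ≤ M) : |∑' i, f i * x i| ≤ (∑' i, |f i|) * M :=
  tsum_of_norm_bounded (hf.hasSum.mul_right M) fun i => by
    rw [Real.norm_eq_abs, abs_mul]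
    exact mul_le_mul_of_nonneg_left (hx i) (abs_nonneg _)

theorem summable_mul_of_abs_le {f x : ι → ℝ} {M : ℝ} (hf : Summable fun i => |f i|)
    (hx : ∀ i, |x i| ≤ M) : Summable fun i => f i * x i :=
  Summable.of_norm_bounded (hf.mul_right M) fun i => by
    rw [Real.norm_eq_abs, abs_mul]
    exact mul_le_mul_of_nonneg_left (hx i) (abs_nonneg _)

theorem summable_abs_sub {f g : ι → ℝ} (hf : Summable fun i => |f i|)
    (hg : Summable fun i => |g i|) : Summable fun i => |f i - g i| :=
  ((summable_abs_iff.mp hf).sub (summable_abs_iff.mp hg)).abs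

theorem one_le_tsum_div_mul {α y : ι → ℝ} {k : ℝ} (hk : 0 < k) (h : k ≤ ∑' i, α i * y i) :
    1 ≤ ∑' i, α i / k * y i := by
  simp_rw [div_mul_eq_mul_div]
  rwa [tsum_div_const, le_div_iff₀ hk, one_mul]

theorem abs_tsum_mul_le_ciSup {G : ι → κ → ℝ} {x : κ → ℝ}
    (hG : ∀ i, Summable fun j => |G i j|) (hGb : BddAbove (range fun i => ∑' j, |G i j|))
    (hx : ∀ j, |x j| ≤ 1) (i : ι) :
    |∑' j, G i j * x j| ≤ ⨆ i, ∑' j, |G i j| :=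
  (abs_tsum_mul_le (hG i) hx).trans ((mul_one _).trans_le (le_ciSup hGb i))

theorem bddAbove_tsum_abs_sub {G H : ι → κ → ℝ}
    (hG : ∀ i, Summable fun j => |G i j|) (hH : ∀ i, Summable fun j => |H i j|)
    (hGb : BddAbove (range fun i => ∑' j, |G i j|))
    (hHb : BddAbove (range fun i => ∑' j, |H i j|)) :
    BddAbove (range fun i => ∑' j, |H i j - G i j|) := by
  obtain ⟨MG, hMG⟩ := hGb
  obtain ⟨MH, hMH⟩ := hHb
  refine ⟨MH + MG, ?_⟩
  rintro _ ⟨i, rfl⟩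
  calc ∑' j, |H i j - G i j|
      ≤ ∑' j, (|H i j| + |G i j|) :=
        (summable_abs_sub (hH i) (hG i)).tsum_le_tsum
          (fun j => abs_sub _ _) ((hH i).add (hG i))
    _ = (∑' j, |H i j|) + ∑' j, |G i j| := (hH i).tsum_add (hG i)
    _ ≤ MH + MG := add_le_add (hMH ⟨i, rfl⟩) (hMG ⟨i, rfl⟩)

theorem abs_tsum_mul_tsum_sub_le {α : ι → ℝ} {G H : ι → κ → ℝ} {x : κ → ℝ}
    (hα : Summable fun i => |α i|)
    (hG : ∀ i, Summable fun j => |G i j|) (hH : ∀ i, Summable fun j => |H i j|)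
    (hGb : BddAbove (range fun i => ∑' j, |G i j|))
    (hHb : BddAbove (range fun i => ∑' j, |H i j|)) (hx : ∀ j, |x j| ≤ 1) :
    |(∑' i, α i * ∑' j, H i j * x j) - ∑' i, α i * ∑' j, G i j * x j|
      ≤ (∑' i, |α i|) * ⨆ i, ∑' j, |H i j - G i j| := by
  have hGx := summable_mul_of_abs_le hα (abs_tsum_mul_le_ciSup hG hGb hx)
  have hHx := summable_mul_of_abs_le hα (abs_tsum_mul_le_ciSup hH hHb hx)
  have hrow : ∀ i, ∑' j, H i j * x j - ∑' j, G i j * x j = ∑' j, (H i j - G i j) * x j := by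
    intro i
    rw [← (summable_mul_of_abs_le (hH i) hx).tsum_sub (summable_mul_of_abs_le (hG i) hx)]
    simp_rw [sub_mul]
  rw [← hHx.tsum_sub hGx]
  simp_rw [← mul_sub, hrow]
  exact abs_tsum_mul_le hα
    (abs_tsum_mul_le_ciSup (fun i => summable_abs_sub (hH i) (hG i))
      (bddAbove_tsum_abs_sub hG hH hGb hHb) hx)

end TsumBounds

theorem stmt_14_general {Act : Type*}
    (φ : ℕ+ → ℝ → ℝ)
    (hbdd : ∀ (n : ℕ+) (s : ℝ), s ∈ Set.Icc (-1 : ℝ) 1 → |φ n s| ≤ 1)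
    (F Fhat : Act → ℕ+ → ℕ+ → ℝ)
    (hFsum : ∀ a, ∀ i : ℕ+, Summable fun j : ℕ+ => |F a i j|)
    (hFhatsum : ∀ a, ∀ i : ℕ+, Summable fun j : ℕ+ => |Fhat a i j|)
    (hFbdd : ∀ a, BddAbove (Set.range fun i : ℕ+ => ∑' j : ℕ+, |F a i j|))
    (hFhatbdd : ∀ a, BddAbove (Set.range fun i : ℕ+ => ∑' j : ℕ+, |Fhat a i j|))
    (β ρ c : ℝ) (hρ : 0 < ρ) (hβcρ : c * ρ < β)
    -- (i) β-separability
    (αbar : ℕ+ → ℝ) (hαbarsum : Summable fun i : ℕ+ => |αbar i|)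
    (hαbarnorm : (∑' i : ℕ+, |αbar i|) = 1)
    (hsep : ∀ s ∈ Set.Icc (-1 : ℝ) 1, ∀ a : Act,
      β ≤ ∑' i : ℕ+, αbar i * ∑' j : ℕ+, F a i j * φ j s)
    -- (ii) Lipschitz continuity of the Bellman criterion
    (hlip : ∀ α : ℕ+ → ℝ, (Summable fun i : ℕ+ => |α i|) → ∀ a : Act,
      ∀ s ∈ Set.Icc (-1 : ℝ) 1, ∀ t ∈ Set.Icc (-1 : ℝ) 1,
        |(∑' i : ℕ+, α i * ∑' j : ℕ+, F a i j * φ j s) -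
            ∑' i : ℕ+, α i * ∑' j : ℕ+, F a i j * φ j t|
          ≤ ρ * (∑' i : ℕ+, |α i|) * |s - t|)
    -- (iii) estimation error
    (herr : ∀ a : Act,
      (⨆ i : ℕ+, ∑' j : ℕ+, |Fhat a i j - F a i j|) ≤ (β - c * ρ) / 2)
    -- (iv) covering set
    (Sbar : Set ℝ) (hSsub : Sbar ⊆ Set.Icc (-1 : ℝ) 1)
    (hcover : ∀ s ∈ Set.Icc (-1 : ℝ) 1, ∃ sb ∈ Sbar, |s - sb| < c) :
    ∀ αhat : ℕ+ → ℝ,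
      (Summable fun i : ℕ+ => |αhat i|) →
      (∀ sb ∈ Sbar, ∀ a : Act,
        1 ≤ ∑' i : ℕ+, αhat i * ∑' j : ℕ+, Fhat a i j * φ j sb) →
      (∀ α : ℕ+ → ℝ, (Summable fun i : ℕ+ => |α i|) →
        (∀ sb ∈ Sbar, ∀ a : Act,
          1 ≤ ∑' i : ℕ+, α i * ∑' j : ℕ+, Fhat a i j * φ j sb) →
        (∑' i : ℕ+, |αhat i|) ≤ ∑' i : ℕ+, |α i|) →
      ∀ s ∈ Set.Icc (-1 : ℝ) 1, ∀ a : Act,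
        0 < ∑' i : ℕ+, αhat i * ∑' j : ℕ+, F a i j * φ j s := by
  intro αhat hαhat hfeas hmin s hs a
  set ε := (β - c * ρ) / 2 with hε
  have hest : ∀ α : ℕ+ → ℝ, (Summable fun i => |α i|) → ∀ b, ∀ t ∈ Icc (-1 : ℝ) 1,
      |(∑' i, α i * ∑' j, Fhat b i j * φ j t) - ∑' i, α i * ∑' j, F b i j * φ j t|
        ≤ (∑' i, |α i|) * ε := fun α hα b t ht =>
    (abs_tsum_mul_tsum_sub_le hα (hFsum b) (hFhatsum b) (hFbdd b) (hFhatbdd b)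
      (hbdd · t ht)).trans (mul_le_mul_of_nonneg_left (herr b) (tsum_nonneg fun _ => abs_nonneg _))
  obtain ⟨sb, hsb, hclose⟩ := hcover s hs
  have hd : ε + ρ * |s - sb| < β - ε := by
    have := mul_lt_mul_of_pos_left hclose hρ
    linarith
  have hd0 : 0 ≤ ε + ρ * |s - sb| := by
    have := mul_nonneg hρ.le (abs_nonneg (s - sb))
    linarith
  have hk : 0 < β - ε := hd0.trans_lt hd
  have hbar : ∀ t ∈ Sbar, ∀ b, 1 ≤ ∑' i, αbar i / (β - ε) * ∑' j, Fhat b i j * φ j t := by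
    intro t ht b
    have h := hest αbar hαbarsum b t (hSsub ht)
    rw [hαbarnorm, one_mul, abs_le] at h
    exact one_le_tsum_div_mul hk (by linarith [hsep t (hSsub ht) b])
  have hN : ∑' i, |αhat i| ≤ 1 / (β - ε) := by
    have h := hmin _ (by simpa only [abs_div, abs_of_pos hk] using hαbarsum.div_const _) hbar
    simpa only [abs_div, abs_of_pos hk, tsum_div_const, hαbarnorm] using h
  have hE := abs_le.mp (hest αhat hαhat a sb (hSsub hsb))
  have hL := abs_le.mp (hlip αhat hαhat a s hs sb (hSsub hsb))
  have hsmall : (∑' i, |αhat i|) * (ε + ρ * |s - sb|) < 1 :=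
    calc (∑' i, |αhat i|) * (ε + ρ * |s - sb|) ≤ 1 / (β - ε) * (ε + ρ * |s - sb|) :=
          mul_le_mul_of_nonneg_right hN hd0
      _ < 1 := by rw [one_div_mul_eq_div, div_lt_one hk]; exact hd
  linarith [hfeas sb hsb a]

/-- Correctness of the linear program in the IRL algorithm: under `β`-separability, a
`ρ·‖α‖₁`-Lipschitz Bellman criterion, estimation error `‖F̂⁽ᵃ⁾ − F⁽ᵃ⁾‖∞ ≤ (β − cρ)/2`, and a
`c`-covering set `S̄` of `[-1,1]`, any ℓ¹-minimizer `α̂` of the constraints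
`α̂ᵀF̂⁽ᵃ⁾φ(s̄) ≥ 1` satisfies `α̂ᵀF⁽ᵃ⁾φ(s) > 0` for all `s ∈ [-1,1]` and all `a`. -/
theorem stmt_14 {Act : Type*} [Fintype Act]
    (φ : ℕ+ → ℝ → ℝ)
    (hbdd : ∀ (n : ℕ+) (s : ℝ), s ∈ Set.Icc (-1 : ℝ) 1 → |φ n s| ≤ 1)
    (F Fhat : Act → ℕ+ → ℕ+ → ℝ)
    (hFsum : ∀ a, ∀ i : ℕ+, Summable fun j : ℕ+ => |F a i j|)
    (hFhatsum : ∀ a, ∀ i : ℕ+, Summable fun j : ℕ+ => |Fhat a i j|)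
    (hFbdd : ∀ a, BddAbove (Set.range fun i : ℕ+ => ∑' j : ℕ+, |F a i j|))
    (hFhatbdd : ∀ a, BddAbove (Set.range fun i : ℕ+ => ∑' j : ℕ+, |Fhat a i j|))
    (β ρ c : ℝ) (hβ : 0 < β) (hρ : 0 < ρ) (hc : 0 < c) (hβcρ : c * ρ < β)
    -- (i) β-separability
    (αbar : ℕ+ → ℝ) (hαbarsum : Summable fun i : ℕ+ => |αbar i|)
    (hαbarnorm : (∑' i : ℕ+, |αbar i|) = 1)
    (hsep : ∀ s ∈ Set.Icc (-1 : ℝ) 1, ∀ a : Act,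
      β ≤ ∑' i : ℕ+, αbar i * ∑' j : ℕ+, F a i j * φ j s)
    -- (ii) Lipschitz continuity of the Bellman criterion
    (hlip : ∀ α : ℕ+ → ℝ, (Summable fun i : ℕ+ => |α i|) → ∀ a : Act,
      ∀ s ∈ Set.Icc (-1 : ℝ) 1, ∀ t ∈ Set.Icc (-1 : ℝ) 1,
        |(∑' i : ℕ+, α i * ∑' j : ℕ+, F a i j * φ j s) -
            ∑' i : ℕ+, α i * ∑' j : ℕ+, F a i j * φ j t|
          ≤ ρ * (∑' i : ℕ+, |α i|) * |s - t|)
    -- (iii) estimation error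
    (herr : ∀ a : Act,
      (⨆ i : ℕ+, ∑' j : ℕ+, |Fhat a i j - F a i j|) ≤ (β - c * ρ) / 2)
    -- (iv) covering set
    (Sbar : Set ℝ) (hSsub : Sbar ⊆ Set.Icc (-1 : ℝ) 1)
    (hcover : ∀ s ∈ Set.Icc (-1 : ℝ) 1, ∃ sb ∈ Sbar, |s - sb| < c) :
    ∀ αhat : ℕ+ → ℝ,
      (Summable fun i : ℕ+ => |αhat i|) →
      (∀ sb ∈ Sbar, ∀ a : Act,
        1 ≤ ∑' i : ℕ+, αhat i * ∑' j : ℕ+, Fhat a i j * φ j sb) →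
      (∀ α : ℕ+ → ℝ, (Summable fun i : ℕ+ => |α i|) →
        (∀ sb ∈ Sbar, ∀ a : Act,
          1 ≤ ∑' i : ℕ+, α i * ∑' j : ℕ+, Fhat a i j * φ j sb) →
        (∑' i : ℕ+, |αhat i|) ≤ ∑' i : ℕ+, |α i|) →
      ∀ s ∈ Set.Icc (-1 : ℝ) 1, ∀ a : Act,
        0 < ∑' i : ℕ+, αhat i * ∑' j : ℕ+, F a i j * φ j s :=
  stmt_14_general φ hbdd F Fhat hFsum hFhatsum hFbdd hFhatbdd β ρ c hρ hβcρ αbar hαbarsum hαbarnorm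
    hsep hlip herr Sbar hSsub hcover
end
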